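/- Let 0 < |ζ| < 1/2 and suppose λ_{jt} satisfies |λ_{jt}| ≤ C j^ζ t^{-ζ-1} for 1 ≤ j ≤ t and |λ_{jt}| ≤ C j^{ζ-1} max(j^{-ζ}, t^{-ζ}) for j > t. Then Σ_{j=0}^∞ (Σ_{t=1}^n λ_{jt})² ≤ C' n for all n ≥ 1. -/

import Mathlib

/-!
Put `θ = |ζ|`. Whatever the sign of `ζ`, the hypotheses give the sign-free bounds
`|λ j t| ≤ C j^(θ-1) t^(-θ)` for `t < j` and `|λ j t| ≤ C j^(-θ) t^(θ-1)` for `j ≤ t`.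
Summing over `t ≤ n` with `∑_{t ≤ m} t^(p-1) ≤ m^p / p` bounds the `j`-th row sum by
`K (n/j)^θ` for `j ≤ n` and by `K (n/j)^(1-θ)` for `j > n`, where `K = C/(1-θ) + C/θ`.
Squared, the first profile sums over `j ≤ n` to at most `K² n / (1 - 2θ)`, and the second
over `j > n` to the same bound, by the tail estimate `∑_i (x + i + 1)^(-ε-1) ≤ x^(-ε) / ε`
with `ε = 1 - 2θ`. Both power-sum estimates telescope Bernoulli's inequality.
-/

open Finset Real

lemma mul_add_one_rpow_sub_one_le {p x : ℝ} (hp0 : 0 ≤ p) (hp1 : p ≤ 1) (hx : 0 ≤ x) :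
    p * (x + 1) ^ (p - 1) ≤ (x + 1) ^ p - x ^ p := by
  have hx1 : 0 < x + 1 := by linarith
  have key := rpow_one_add_le_one_add_mul_self (s := -1 / (x + 1))
    (by rw [neg_div, neg_le_neg_iff, div_le_one hx1]; linarith) hp0 hp1
  rw [show 1 + -1 / (x + 1) = x / (x + 1) by field_simp; ring, div_rpow hx hx1.le,
    div_le_iff₀ (rpow_pos_of_pos hx1 p),
    show (1 + p * (-1 / (x + 1))) * (x + 1) ^ p = (x + 1) ^ p - p * ((x + 1) ^ p / (x + 1)) by
      field_simp; ring] at key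
  rw [rpow_sub_one hx1.ne']
  linarith

lemma mul_add_one_rpow_neg_sub_one_le {ε x : ℝ} (hε : 0 ≤ ε) (hx : 0 < x) :
    ε * (x + 1) ^ (-ε - 1) ≤ x ^ (-ε) - (x + 1) ^ (-ε) := by
  have hx1 : 0 < x + 1 := by linarith
  have key := one_add_mul_self_le_rpow_one_add (s := 1 / x)
    (by have := one_div_pos.mpr hx; linarith) (p := 1 + ε) (by linarith)
  rw [show 1 + 1 / x = (x + 1) / x by field_simp, div_rpow hx1.le hx.le,
    le_div_iff₀ (rpow_pos_of_pos hx _), rpow_add hx, rpow_add hx1, rpow_one, rpow_one,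
    show (1 + (1 + ε) * (1 / x)) * (x * x ^ ε) = (x + 1 + ε) * x ^ ε by field_simp; ring] at key
  have difference : x ^ (-ε) - (x + 1) ^ (-ε) - ε * (x + 1) ^ (-ε - 1)
      = ((x + 1) * (x + 1) ^ ε - (x + 1 + ε) * x ^ ε) / (x ^ ε * (x + 1) ^ ε * (x + 1)) := by
    rw [sub_eq_add_neg (-ε), rpow_add hx1, rpow_neg hx.le, rpow_neg hx1.le, rpow_neg_one]
    field_simp
    ring
  rw [← sub_nonneg, difference]
  exact div_nonneg (sub_nonneg.mpr key) (by positivity)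

lemma sum_range_add_one_rpow_sub_one_le {p : ℝ} (hp0 : 0 < p) (hp1 : p ≤ 1) (m : ℕ) :
    ∑ i ∈ range m, ((i : ℝ) + 1) ^ (p - 1) ≤ (m : ℝ) ^ p / p := by
  rw [le_div_iff₀ hp0, sum_mul]
  calc ∑ i ∈ range m, ((i : ℝ) + 1) ^ (p - 1) * p
      ≤ ∑ i ∈ range m, (((i + 1 : ℕ) : ℝ) ^ p - (i : ℝ) ^ p) := by
        gcongr with i
        push_cast
        linarith [mul_add_one_rpow_sub_one_le hp0.le hp1 (Nat.cast_nonneg (α := ℝ) i)]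
    _ = (m : ℝ) ^ p := by
        rw [sum_range_sub (fun i => (i : ℝ) ^ p), Nat.cast_zero, zero_rpow hp0.ne', sub_zero]

lemma sum_Icc_rpow_sub_one_le {p : ℝ} (hp0 : 0 < p) (hp1 : p ≤ 1) (m : ℕ) :
    ∑ t ∈ Icc 1 m, (t : ℝ) ^ (p - 1) ≤ (m : ℝ) ^ p / p := by
  rw [← Ico_add_one_right_eq_Icc, sum_Ico_eq_sum_range]
  simpa [add_comm] using sum_range_add_one_rpow_sub_one_le hp0 hp1 m

lemma sum_range_rpow_neg_sub_one_le {ε x : ℝ} (hε : 0 < ε) (hx : 0 < x) (N : ℕ) :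
    ∑ i ∈ range N, (x + i + 1) ^ (-ε - 1) ≤ x ^ (-ε) / ε := by
  rw [le_div_iff₀ hε, sum_mul]
  calc ∑ i ∈ range N, (x + i + 1) ^ (-ε - 1) * ε
      ≤ ∑ i ∈ range N, ((x + i) ^ (-ε) - (x + (i + 1 : ℕ)) ^ (-ε)) := by
        gcongr with i
        push_cast
        rw [← add_assoc, mul_comm]
        exact mul_add_one_rpow_neg_sub_one_le hε.le (by positivity)
    _ ≤ x ^ (-ε) := by
        rw [sum_range_sub' (fun i : ℕ => (x + i) ^ (-ε)), Nat.cast_zero, add_zero,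
          sub_le_self_iff]
        exact rpow_nonneg (by positivity) _

lemma rpow_mul_rpow_neg_le_one {x y s : ℝ} (hx : 0 ≤ x) (hxy : x ≤ y) (hs : 0 ≤ s) :
    x ^ s * y ^ (-s) ≤ 1 := by
  rcases hx.eq_or_lt with rfl | hx
  · rcases hs.eq_or_lt with rfl | hs
    · simp
    · simp [zero_rpow hs.ne']
  rw [rpow_neg (hx.trans_le hxy).le, ← div_eq_mul_inv]
  exact div_le_one_of_le₀ (rpow_le_rpow hx.le hxy hs) (rpow_nonneg (hx.le.trans hxy) s)

lemma one_le_rpow_mul_rpow_neg {x y s : ℝ} (hx : 0 < x) (hxy : x ≤ y) (hs : 0 ≤ s) :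
    1 ≤ y ^ s * x ^ (-s) := by
  rw [rpow_neg hx.le, ← div_eq_mul_inv]
  exact (one_le_div₀ (rpow_pos_of_pos hx s)).mpr (rpow_le_rpow hx.le hxy hs)

lemma mul_rpow_mul_rpow_neg_sub_one_le {ζ C j t : ℝ} (hC : 0 ≤ C) (hj : 0 < j)
    (hjt : j ≤ t) :
    C * j ^ ζ * t ^ (-ζ - 1) ≤ C * j ^ (-|ζ|) * t ^ (|ζ| - 1) := by
  rw [mul_assoc, mul_assoc]
  refine mul_le_mul_of_nonneg_left ?_ hC
  have ht : 0 < t := hj.trans_le hjt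
  have hs : 0 ≤ ζ + |ζ| := by linarith [neg_abs_le ζ]
  have split : j ^ (-|ζ|) * t ^ (|ζ| - 1) * (j ^ (ζ + |ζ|) * t ^ (-(ζ + |ζ|)))
      = j ^ ζ * t ^ (-ζ - 1) := by
    rw [mul_mul_mul_comm, ← rpow_add hj, ← rpow_add ht]
    ring_nf
  rw [← split]
  exact mul_le_of_le_one_right (by positivity) (rpow_mul_rpow_neg_le_one hj.le hjt hs)

lemma mul_rpow_sub_one_mul_max_le {ζ C j t : ℝ} (hC : 0 ≤ C) (ht : 0 < t) (htj : t ≤ j) :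
    C * j ^ (ζ - 1) * max (j ^ (-ζ)) (t ^ (-ζ)) ≤ C * j ^ (|ζ| - 1) * t ^ (-|ζ|) := by
  rw [mul_assoc, mul_assoc]
  refine mul_le_mul_of_nonneg_left ?_ hC
  have hj : 0 < j := ht.trans_le htj
  rw [mul_max_of_nonneg _ _ (rpow_nonneg hj.le _)]
  refine max_le ?_ ?_
  · rw [← rpow_add hj, show ζ - 1 + -ζ = (|ζ| - 1) + -|ζ| by ring, rpow_add hj]
    exact mul_le_mul_of_nonneg_left
      (rpow_le_rpow_of_nonpos ht htj (neg_nonpos.mpr (abs_nonneg ζ))) (rpow_nonneg hj.le _)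
  · have hs : 0 ≤ |ζ| - ζ := by linarith [le_abs_self ζ]
    have split : j ^ (ζ - 1) * t ^ (-ζ) * (j ^ (|ζ| - ζ) * t ^ (-(|ζ| - ζ)))
        = j ^ (|ζ| - 1) * t ^ (-|ζ|) := by
      rw [mul_mul_mul_comm, ← rpow_add hj, ← rpow_add ht]
      ring_nf
    rw [← split]
    exact le_mul_of_one_le_right (by positivity) (one_le_rpow_mul_rpow_neg ht htj hs)

section Row

variable {a : ℕ → ℝ} {C θ : ℝ} {j : ℕ}

lemma sum_Icc_one_abs_le_of_lt (hC : 0 ≤ C) (hθ0 : 0 ≤ θ) (hθ1 : θ < 1)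
    (below : ∀ t, 1 ≤ t → t < j → |a t| ≤ C * (j : ℝ) ^ (θ - 1) * (t : ℝ) ^ (-θ))
    {m : ℕ} (hmj : m < j) :
    ∑ t ∈ Icc 1 m, |a t| ≤ C / (1 - θ) * (m : ℝ) ^ (1 - θ) * (j : ℝ) ^ (θ - 1) := by
  calc ∑ t ∈ Icc 1 m, |a t|
      ≤ ∑ t ∈ Icc 1 m, C * (j : ℝ) ^ (θ - 1) * (t : ℝ) ^ ((1 - θ) - 1) := by
        refine sum_le_sum fun t ht => ?_
        rw [mem_Icc] at ht
        rw [sub_sub_cancel_left]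
        exact below t ht.1 (by omega)
    _ ≤ C * (j : ℝ) ^ (θ - 1) * ((m : ℝ) ^ (1 - θ) / (1 - θ)) := by
        rw [← mul_sum]
        gcongr
        exact sum_Icc_rpow_sub_one_le (by linarith) (by linarith) m
    _ = C / (1 - θ) * (m : ℝ) ^ (1 - θ) * (j : ℝ) ^ (θ - 1) := by ring

lemma sum_Icc_abs_le (hC : 0 ≤ C) (hθ0 : 0 < θ) (hθ1 : θ ≤ 1) (hj : 1 ≤ j)
    (above : ∀ t, j ≤ t → |a t| ≤ C * (j : ℝ) ^ (-θ) * (t : ℝ) ^ (θ - 1)) (n : ℕ) :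
    ∑ t ∈ Icc j n, |a t| ≤ C / θ * (n : ℝ) ^ θ * (j : ℝ) ^ (-θ) := by
  calc ∑ t ∈ Icc j n, |a t|
      ≤ ∑ t ∈ Icc j n, C * (j : ℝ) ^ (-θ) * (t : ℝ) ^ (θ - 1) :=
        sum_le_sum fun t ht => above t (mem_Icc.mp ht).1
    _ ≤ ∑ t ∈ Icc 1 n, C * (j : ℝ) ^ (-θ) * (t : ℝ) ^ (θ - 1) :=
        sum_le_sum_of_subset_of_nonneg (Icc_subset_Icc_left hj) fun _ _ _ => by positivity
    _ ≤ C * (j : ℝ) ^ (-θ) * ((n : ℝ) ^ θ / θ) := by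
        rw [← mul_sum]
        gcongr
        exact sum_Icc_rpow_sub_one_le hθ0 hθ1 n
    _ = C / θ * (n : ℝ) ^ θ * (j : ℝ) ^ (-θ) := by ring

lemma sum_Icc_one_abs_le_of_le (hC : 0 ≤ C) (hθ0 : 0 < θ) (hθ1 : θ < 1) (hj : 1 ≤ j)
    (below : ∀ t, 1 ≤ t → t < j → |a t| ≤ C * (j : ℝ) ^ (θ - 1) * (t : ℝ) ^ (-θ))
    (above : ∀ t, j ≤ t → |a t| ≤ C * (j : ℝ) ^ (-θ) * (t : ℝ) ^ (θ - 1))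
    {n : ℕ} (hjn : j ≤ n) :
    ∑ t ∈ Icc 1 n, |a t| ≤ (C / (1 - θ) + C / θ) * (n : ℝ) ^ θ * (j : ℝ) ^ (-θ) := by
  have hsplit : Icc 1 n = Icc 1 (j - 1) ∪ Icc j n := by
    ext t; simp only [mem_Icc, mem_union]; omega
  have hdisj : Disjoint (Icc 1 (j - 1)) (Icc j n) := by
    simp only [disjoint_left, mem_Icc]; omega
  have hj0 : (0 : ℝ) < j := by exact_mod_cast hj
  have lower :
      ∑ t ∈ Icc 1 (j - 1), |a t| ≤ C / (1 - θ) * (n : ℝ) ^ θ * (j : ℝ) ^ (-θ) := by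
    refine (sum_Icc_one_abs_le_of_lt hC hθ0.le hθ1 below (by omega : j - 1 < j)).trans ?_
    rw [mul_assoc, mul_assoc, show θ - 1 = -(1 - θ) by ring]
    refine mul_le_mul_of_nonneg_left ?_ (div_nonneg hC (by linarith))
    exact (rpow_mul_rpow_neg_le_one (Nat.cast_nonneg _) (Nat.cast_le.mpr (Nat.sub_le j 1))
      (by linarith)).trans (one_le_rpow_mul_rpow_neg hj0 (Nat.cast_le.mpr hjn) hθ0.le)
  rw [hsplit, sum_union hdisj, add_mul, add_mul]
  exact add_le_add lower (sum_Icc_abs_le hC hθ0 hθ1.le hj above n)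

end Row

lemma mul_rpow_mul_rpow_sq {K x y p q : ℝ} (hx : 0 ≤ x) (hy : 0 ≤ y) :
    (K * x ^ p * y ^ q) ^ 2 = K ^ 2 * x ^ (2 * p) * y ^ (2 * q) := by
  rw [mul_pow, mul_pow, ← rpow_mul_natCast hx, ← rpow_mul_natCast hy]
  push_cast
  ring_nf

lemma sum_range_sq_head_le {K θ : ℝ} (hθ0 : 0 ≤ θ) (hθ : θ < 1 / 2) (n : ℕ) :
    ∑ j ∈ range n, (K * (n : ℝ) ^ θ * ((j : ℝ) + 1) ^ (-θ)) ^ 2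
      ≤ K ^ 2 / (1 - 2 * θ) * n := by
  have hε : 0 < 1 - 2 * θ := by linarith
  calc ∑ j ∈ range n, (K * (n : ℝ) ^ θ * ((j : ℝ) + 1) ^ (-θ)) ^ 2
      = K ^ 2 * (n : ℝ) ^ (2 * θ) * ∑ j ∈ range n, ((j : ℝ) + 1) ^ ((1 - 2 * θ) - 1) := by
        rw [mul_sum]
        refine sum_congr rfl fun j _ => ?_
        rw [mul_rpow_mul_rpow_sq (Nat.cast_nonneg _) (by positivity)]
        ring_nf
    _ ≤ K ^ 2 * (n : ℝ) ^ (2 * θ) * ((n : ℝ) ^ (1 - 2 * θ) / (1 - 2 * θ)) := by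
        gcongr
        exact sum_range_add_one_rpow_sub_one_le hε (by linarith) n
    _ = K ^ 2 / (1 - 2 * θ) * n := by
        rw [mul_div_assoc', mul_assoc, ← rpow_add' (Nat.cast_nonneg _) (by norm_num),
          add_sub_cancel, rpow_one]
        ring

lemma sum_range_sq_tail_le {K θ : ℝ} (hθ : θ < 1 / 2) {n : ℕ} (hn : 0 < n) (N : ℕ) :
    ∑ i ∈ range N, (K * (n : ℝ) ^ (1 - θ) * (((n + i : ℕ) : ℝ) + 1) ^ (θ - 1)) ^ 2
      ≤ K ^ 2 / (1 - 2 * θ) * n := by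
  have hε : 0 < 1 - 2 * θ := by linarith
  have hn0 : (0 : ℝ) < n := by exact_mod_cast hn
  calc ∑ i ∈ range N, (K * (n : ℝ) ^ (1 - θ) * (((n + i : ℕ) : ℝ) + 1) ^ (θ - 1)) ^ 2
      = K ^ 2 * (n : ℝ) ^ (1 + (1 - 2 * θ))
          * ∑ i ∈ range N, ((n : ℝ) + i + 1) ^ (-(1 - 2 * θ) - 1) := by
        rw [mul_sum]
        refine sum_congr rfl fun i _ => ?_
        rw [mul_rpow_mul_rpow_sq (Nat.cast_nonneg _) (by positivity)]
        push_cast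
        ring_nf
    _ ≤ K ^ 2 * (n : ℝ) ^ (1 + (1 - 2 * θ))
          * ((n : ℝ) ^ (-(1 - 2 * θ)) / (1 - 2 * θ)) := by
        gcongr
        exact sum_range_rpow_neg_sub_one_le hε hn0 N
    _ = K ^ 2 / (1 - 2 * θ) * n := by
        rw [mul_div_assoc', mul_assoc, ← rpow_add hn0, add_neg_cancel_right, rpow_one]
        ring

lemma tsum_sq_le_of_abs_le {K θ : ℝ} (hθ0 : 0 ≤ θ) (hθ : θ < 1 / 2) {n : ℕ} (hn : 0 < n)
    {f : ℕ → ℝ} (head : ∀ j < n, |f j| ≤ K * (n : ℝ) ^ θ * ((j : ℝ) + 1) ^ (-θ))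
    (tail : ∀ j, n ≤ j → |f j| ≤ K * (n : ℝ) ^ (1 - θ) * ((j : ℝ) + 1) ^ (θ - 1)) :
    ∑' j, f j ^ 2 ≤ 2 * K ^ 2 / (1 - 2 * θ) * n := by
  have sq_le {x B : ℝ} (h : |x| ≤ B) : x ^ 2 ≤ B ^ 2 := by
    simpa only [sq_abs] using pow_le_pow_left₀ (abs_nonneg x) h 2
  refine Real.tsum_le_of_sum_range_le (fun _ => sq_nonneg _) fun N => ?_
  calc ∑ j ∈ range N, f j ^ 2 ≤ ∑ j ∈ range (n + N), f j ^ 2 :=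
        sum_le_sum_of_subset_of_nonneg (range_subset_range.mpr (by omega)) fun _ _ _ => sq_nonneg _
    _ = ∑ j ∈ range n, f j ^ 2 + ∑ i ∈ range N, f (n + i) ^ 2 := sum_range_add _ _ _
    _ ≤ K ^ 2 / (1 - 2 * θ) * n + K ^ 2 / (1 - 2 * θ) * n := by
        gcongr
        · exact (sum_le_sum fun j hj => sq_le (head j (mem_range.mp hj))).trans
            (sum_range_sq_head_le hθ0 hθ n)
        · refine (sum_le_sum fun i _ => sq_le (tail (n + i) (by omega))).trans ?_
          exact_mod_cast sum_range_sq_tail_le (K := K) hθ hn N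
    _ = 2 * K ^ 2 / (1 - 2 * θ) * n := by ring

theorem stmt14 (ζ : ℝ) (hζ1 : 0 < |ζ|) (hζ2 : |ζ| < 1 / 2)
    (lam : ℕ → ℕ → ℝ) (C : ℝ)
    (h1 : ∀ j t : ℕ, 1 ≤ j → j ≤ t →
      |lam j t| ≤ C * (j : ℝ) ^ ζ * (t : ℝ) ^ (-ζ - 1))
    (h2 : ∀ j t : ℕ, 1 ≤ t → t < j →
      |lam j t| ≤ C * (j : ℝ) ^ (ζ - 1) * max ((j : ℝ) ^ (-ζ)) ((t : ℝ) ^ (-ζ))) :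
    ∃ C' : ℝ, 0 < C' ∧ ∀ n : ℕ, 1 ≤ n →
      ∑' j : ℕ, (∑ t ∈ Finset.Icc 1 n, lam (j + 1) t) ^ 2 ≤ C' * n := by
  have hC : 0 ≤ C := by simpa using (abs_nonneg _).trans (h1 1 1 le_rfl le_rfl)
  have hε : 0 < 1 - 2 * |ζ| := by linarith
  set K := C / (1 - |ζ|) + C / |ζ|
  have below : ∀ j t : ℕ, 1 ≤ t → t < j →
      |lam j t| ≤ C * (j : ℝ) ^ (|ζ| - 1) * (t : ℝ) ^ (-|ζ|) := fun j t ht htj =>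
    (h2 j t ht htj).trans
      (mul_rpow_sub_one_mul_max_le hC (by exact_mod_cast ht) (by exact_mod_cast htj.le))
  have above : ∀ j t : ℕ, 1 ≤ j → j ≤ t →
      |lam j t| ≤ C * (j : ℝ) ^ (-|ζ|) * (t : ℝ) ^ (|ζ| - 1) := fun j t hj hjt =>
    (h1 j t hj hjt).trans
      (mul_rpow_mul_rpow_neg_sub_one_le hC (by exact_mod_cast hj) (by exact_mod_cast hjt))
  refine ⟨2 * K ^ 2 / (1 - 2 * |ζ|) + 1, by positivity, fun n hn => ?_⟩
  calc ∑' j : ℕ, (∑ t ∈ Icc 1 n, lam (j + 1) t) ^ 2 ≤ 2 * K ^ 2 / (1 - 2 * |ζ|) * n := by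
        refine tsum_sq_le_of_abs_le hζ1.le hζ2 hn (fun j hj => ?_) (fun j hj => ?_)
        · refine (abs_sum_le_sum_abs _ _).trans ?_
          exact_mod_cast sum_Icc_one_abs_le_of_le hC hζ1 (by linarith) (by omega)
            (below (j + 1)) (above (j + 1) · (by omega)) (by omega : j + 1 ≤ n)
        · refine (abs_sum_le_sum_abs _ _).trans <| (sum_Icc_one_abs_le_of_lt hC hζ1.le
            (by linarith) (below (j + 1)) (by omega : n < j + 1)).trans ?_
          push_cast
          gcongr
          exact le_add_of_nonneg_right (div_nonneg hC hζ1.le)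
    _ ≤ (2 * K ^ 2 / (1 - 2 * |ζ|) + 1) * n := by gcongr; linarith
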